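/- arXiv:2204.09666 — 4 statements merged into one kernel-verified Lean document; each statement's English description precedes it below -/
import Mathlib

section
/- Let G be a finite group and g ∈ G. Then g lies in the commutator subgroup G' if and only if g can be written as a product g = g₁g₂⋯g_t of elements g₁,…,g_t ∈ G such that there exists a permutation σ of {1,…,t} with g_{σ(1)}g_{σ(2)}⋯g_{σ(t)} = e. -/
/-- **Lemma (commutator characterization).** In a finite group `G`, an element `g` lies in the
commutator subgroup `G'` if and only if `g` can be written as a product `g = g₁ ⋯ g_t`
such that some permutation of the factors multiplies to the identity. -/
theorem commutator_mem_iff_exists_perm_prod_eq_one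
    (G : Type*) [Group G] [Finite G] (g : G) :
    g ∈ commutator G ↔
      ∃ l : List G, l.prod = g ∧ ∃ l' : List G, l'.Perm l ∧ l'.prod = 1 := by
  constructor
  · intro hg
    rw [commutator_eq_closure] at hg
    induction hg using Subgroup.closure_induction with
    | mem x hx =>
      obtain ⟨a, b, rfl⟩ := hx
      refine ⟨[a, b, a⁻¹, b⁻¹], by simp [commutatorElement_def, mul_assoc],
        [a, a⁻¹, b, b⁻¹], ?_, by simp⟩
      exact List.Perm.cons a (List.Perm.swap b a⁻¹ [b⁻¹])
    | one => exact ⟨[], rfl, [], List.Perm.refl _, rfl⟩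
    | mul x y _ _ hx hy =>
      obtain ⟨lx, hlx, lx', hpx, hpx1⟩ := hx
      obtain ⟨ly, hly, ly', hpy, hpy1⟩ := hy
      exact ⟨lx ++ ly, by simp [hlx, hly], lx' ++ ly', hpx.append hpy,
        by simp [hpx1, hpy1]⟩
    | inv x _ hx =>
      obtain ⟨l, hl, l', hp, hp1⟩ := hx
      refine ⟨((l.map (·⁻¹)).reverse), by rw [← List.prod_inv_reverse, hl],
        ((l'.map (·⁻¹)).reverse), ?_, by rw [← List.prod_inv_reverse, hp1, inv_one]⟩
      exact ((List.reverse_perm _).trans (hp.map _)).trans (List.reverse_perm _).symm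
  · rintro ⟨l, rfl, l', hp, hp1⟩
    rw [← QuotientGroup.eq_one_iff]
    have h1 : Abelianization.of l.prod = 1 := by
      rw [← List.prod_hom l Abelianization.of,
        ← List.Perm.prod_eq ((hp.map (Abelianization.of))), List.prod_hom, hp1, map_one]
    exact h1
end

section
/- Let G be a finite group and suppose there exists g ∈ G such that the number of solutions x ∈ G to x² = g is strictly greater than (3/4)|G|. Then G is an elementary abelian 2-group (every non-identity element has order 2) and g = e. -/
private lemma comm_aux {G : Type*} [Group G] {a x y : G}
    (hx : x * a * x = a) (hy : y * a * y = a) (hxy : (x * y) * a * (x * y) = a) :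
    x * y = y * x := by
  have h1 : y * a = a * y⁻¹ := by
    calc y * a = (y * a * y) * y⁻¹ := by group
      _ = a * y⁻¹ := by rw [hy]
  have h2 : x * a = a * x⁻¹ := by
    calc x * a = (x * a * x) * x⁻¹ := by group
      _ = a * x⁻¹ := by rw [hx]
  have key : a * (x⁻¹ * y⁻¹ * x * y) = a * 1 := by
    rw [mul_one]
    calc a * (x⁻¹ * y⁻¹ * x * y) = (a * x⁻¹) * (y⁻¹ * (x * y)) := by group
      _ = (x * a) * (y⁻¹ * (x * y)) := by rw [h2]
      _ = x * (a * y⁻¹) * (x * y) := by group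
      _ = x * (y * a) * (x * y) := by rw [h1]
      _ = (x * y) * a * (x * y) := by group
      _ = a := hxy
  have h3 : x⁻¹ * y⁻¹ * x * y = 1 := mul_left_cancel key
  calc x * y = (y * x) * (x⁻¹ * y⁻¹ * x * y) := by group
    _ = (y * x) * 1 := by rw [h3]
    _ = y * x := mul_one _

private def invCenterSubgroup (G : Type*) [Group G] : Subgroup G where
  carrier := {x | x ^ 2 = 1 ∧ ∀ y, x * y = y * x}
  one_mem' := ⟨one_pow 2, fun y => by rw [one_mul, mul_one]⟩
  mul_mem' := by
    rintro p q ⟨hp1, hp2⟩ ⟨hq1, hq2⟩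
    refine ⟨?_, fun y => ?_⟩
    · have h := hq2 p
      calc (p * q) ^ 2 = p * (q * p) * q := by rw [pow_two]; group
        _ = p * (p * q) * q := by rw [← h]
        _ = p ^ 2 * q ^ 2 := by rw [pow_two, pow_two]; group
        _ = 1 := by rw [hp1, hq1, one_mul]
    · calc p * q * y = p * (q * y) := by rw [mul_assoc]
        _ = p * (y * q) := by rw [hq2 y]
        _ = (p * y) * q := by rw [mul_assoc]
        _ = (y * p) * q := by rw [hp2 y]
        _ = y * (p * q) := by rw [mul_assoc]
  inv_mem' := by
    rintro p ⟨hp1, hp2⟩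
    have hinv : p⁻¹ = p := by
      apply inv_eq_of_mul_eq_one_right
      rw [← pow_two, hp1]
    rw [hinv]
    exact ⟨hp1, hp2⟩

/-- If a finite group `G` has an element `g` with more than `(3/4)|G|` square roots, then
`G` is an elementary abelian 2-group and `g` is the identity. -/
theorem elementary_abelian_of_many_square_roots
    (G : Type*) [Group G] [Finite G] (g : G)
    (h : (3 : ℚ) / 4 * Nat.card G < Nat.card {x : G // x ^ 2 = g}) :
    (∀ x : G, x ^ 2 = 1) ∧ g = 1 := by
  classical
  cases nonempty_fintype G
  set n := Fintype.card G with hn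
  set S : Finset G := Finset.univ.filter (fun x => x ^ 2 = g) with hS
  -- translate the rational hypothesis to naturals
  have hcardS : Nat.card {x : G // x ^ 2 = g} = S.card := by
    rw [Nat.card_eq_fintype_card, Fintype.card_subtype]
  have hSineq : 3 * n < 4 * S.card := by
    have h' : (3 : ℚ) * n < 4 * S.card := by
      rw [hcardS, Nat.card_eq_fintype_card] at h
      push_cast at h ⊢
      linarith
    exact_mod_cast h'
  -- pick a square root a of g
  have hSne : S.Nonempty := by
    rw [← Finset.card_pos]; omega
  obtain ⟨a, haS⟩ := hSne
  have ha2 : a ^ 2 = g := (Finset.mem_filter.mp haS).2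
  -- the translated set
  set T : Finset G := S.image (fun b => a⁻¹ * b) with hT
  have hTcard : T.card = S.card := Finset.card_image_of_injective _ (mul_right_injective a⁻¹)
  have hTineq : 3 * n < 4 * T.card := by omega
  -- key property of T
  have hTkey : ∀ t ∈ T, t * a * t = a := by
    intro t ht
    obtain ⟨b, hbS, hbt⟩ := Finset.mem_image.mp ht
    have hb2 : b ^ 2 = g := (Finset.mem_filter.mp hbS).2
    subst hbt
    have : b * b = a * a := by
      rw [← pow_two, ← pow_two, hb2, ha2]
    calc a⁻¹ * b * a * (a⁻¹ * b) = a⁻¹ * (b * b) := by group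
      _ = a⁻¹ * (a * a) := by rw [this]
      _ = a := by group
  -- every element of T commutes with everything and squares to 1
  have hTsub : ∀ x ∈ T, x ∈ invCenterSubgroup G := by
    intro x hx
    -- first: x is central
    set U : Finset G := T ∩ T.image (fun t => x⁻¹ * t) with hU
    have hUcard : n < 2 * U.card := by
      have h1 : (T.image (fun t => x⁻¹ * t)).card = T.card :=
        Finset.card_image_of_injective _ (mul_right_injective x⁻¹)
      have h2 := Finset.card_inter_add_card_union T (T.image (fun t => x⁻¹ * t))
      have h3 : (T ∪ T.image (fun t => x⁻¹ * t)).card ≤ n := by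
        rw [hn]; exact Finset.card_le_univ _
      rw [hU]
      omega
    have hUcomm : ∀ y ∈ U, y ∈ Subgroup.centralizer {x} := by
      intro y hy
      rw [Finset.mem_inter] at hy
      obtain ⟨hyT, hyI⟩ := hy
      obtain ⟨t, htT, htE⟩ := Finset.mem_image.mp hyI
      have hxyT : x * y ∈ T := by
        rw [← htE, ← mul_assoc, mul_inv_cancel, one_mul]; exact htT
      have := comm_aux (hTkey x hx) (hTkey y hyT) (hTkey (x * y) hxyT)
      exact Subgroup.mem_centralizer_singleton_iff.mpr this.symm
    have hcent : Subgroup.centralizer {x} = (⊤ : Subgroup G) := by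
      apply Subgroup.eq_top_of_card_eq
      have hdvd := Subgroup.card_subgroup_dvd_card (Subgroup.centralizer ({x} : Set G))
      have hle : U.card ≤ Nat.card (Subgroup.centralizer ({x} : Set G)) := by
        rw [Nat.card_eq_fintype_card, Fintype.card_subtype]
        apply Finset.card_le_card
        intro y hy
        simp only [Finset.mem_filter, Finset.mem_univ, true_and]
        exact hUcomm y hy
      refine (Nat.eq_of_dvd_of_lt_two_mul Nat.card_pos.ne' hdvd ?_).symm
      rw [Nat.card_eq_fintype_card (α := G), ← hn]
      omega
    have hcentral : ∀ y, x * y = y * x := by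
      intro y
      have : y ∈ Subgroup.centralizer ({x} : Set G) := hcent ▸ Subgroup.mem_top y
      exact (Subgroup.mem_centralizer_singleton_iff.mp this).symm
    -- second: x ^ 2 = 1, since x central and a x a⁻¹ = x⁻¹ from t a t = a
    have hx1 : x ^ 2 = 1 := by
      have h1 := hTkey x hx
      have h2 : x * a = a * x := (hcentral a)
      rw [h2] at h1
      -- a * x * x = a
      have : a * (x * x) = a * 1 := by rw [mul_one, ← mul_assoc]; exact h1
      rw [pow_two]
      exact mul_left_cancel this
    exact ⟨hx1, hcentral⟩
  -- the subgroup has more than half the elements, hence is everything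
  have htop : invCenterSubgroup G = ⊤ := by
    apply Subgroup.eq_top_of_card_eq
    have hdvd := Subgroup.card_subgroup_dvd_card (invCenterSubgroup G)
    have hle : T.card ≤ Nat.card (invCenterSubgroup G) := by
      rw [Nat.card_eq_fintype_card, Fintype.card_subtype]
      apply Finset.card_le_card
      intro y hy
      simp only [Finset.mem_filter, Finset.mem_univ, true_and]
      exact hTsub y hy
    refine (Nat.eq_of_dvd_of_lt_two_mul Nat.card_pos.ne' hdvd ?_).symm
    rw [Nat.card_eq_fintype_card (α := G), ← hn]
    omega
  have hall : ∀ x : G, x ^ 2 = 1 := by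
    intro x
    have : x ∈ invCenterSubgroup G := htop ▸ Subgroup.mem_top x
    exact this.1
  exact ⟨hall, by rw [← ha2, hall a]⟩
end

section
/- Let G = (ℤ/2)^k with k ≥ 2, let a₁ ≠ a₂ and b₁ ≠ b₂ be elements of G with a₁ + a₂ + b₁ + b₂ = 0, and set A = G \ {a₁,a₂}, B = G \ {b₁,b₂}. Then there is no bijection φ : A → B such that the map x ↦ x + φ(x) is injective on A. -/
open Finset

private lemma two_torsion {k : ℕ} (x : Fin k → ZMod 2) : x + x = 0 := by
  funext i
  simpa using CharTwo.add_self_eq_zero (x i)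

private lemma sum_univ_zmod2 (k : ℕ) (hk : 2 ≤ k) :
    ∑ x : Fin k → ZMod 2, x = 0 := by
  funext i
  rw [Finset.sum_apply, Pi.zero_apply]
  have h0 : 0 < k := by omega
  have h1 : 1 < k := hk
  set j : Fin k := if i = ⟨0, h0⟩ then ⟨1, h1⟩ else ⟨0, h0⟩ with hj
  have hji : j ≠ i := by
    rcases eq_or_ne i ⟨0, h0⟩ with h | h
    · subst h; simp only [hj, if_pos rfl]; simp [Fin.ext_iff]
    · simp only [hj, if_neg h]; exact fun hh => h hh.symm
  refine Finset.sum_ninvolution (fun x => Function.update x j (x j + 1)) ?_ ?_ ?_ ?_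
  · intro a
    show a i + Function.update a j (a j + 1) i = 0
    rw [Function.update_of_ne hji.symm]
    exact CharTwo.add_self_eq_zero (a i)
  · intro a _ h
    have := congrFun h j
    simp at this
  · intro a; exact mem_univ _
  · intro a
    funext l
    rcases eq_or_ne l j with rfl | h
    · simp [add_assoc, CharTwo.add_self_eq_zero]
    · simp [Function.update_of_ne h]

/-- In `G = (ℤ/2)^k` with `k ≥ 2`, if `a₁ ≠ a₂`, `b₁ ≠ b₂` and `a₁ + a₂ + b₁ + b₂ = 0`,
then the subsquare `(G \ {a₁,a₂}) × (G \ {b₁,b₂})` of the addition table has no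
transversal: there is no bijection `φ : G \ {a₁,a₂} → G \ {b₁,b₂}` with `x ↦ x + φ x`
injective. -/
theorem boolean_group_deleted_subsquare_no_transversal
    (k : ℕ) (hk : 2 ≤ k) (a₁ a₂ b₁ b₂ : Fin k → ZMod 2)
    (ha : a₁ ≠ a₂) (hb : b₁ ≠ b₂) (hsum : a₁ + a₂ + b₁ + b₂ = 0) :
    ¬ ∃ φ : (({a₁, a₂}ᶜ : Set (Fin k → ZMod 2))) ≃ (({b₁, b₂}ᶜ : Set (Fin k → ZMod 2))),
        Function.Injective fun x : ({a₁, a₂}ᶜ : Set (Fin k → ZMod 2)) =>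
          (x : Fin k → ZMod 2) + (φ x : Fin k → ZMod 2) := by
  classical
  rintro ⟨φ, hφ⟩
  have hS : ∑ x : Fin k → ZMod 2, x = 0 := sum_univ_zmod2 k hk
  -- sum over the deleted rows
  have hSA : ∑ x : (({a₁, a₂}ᶜ : Set (Fin k → ZMod 2))), (x : Fin k → ZMod 2) = a₁ + a₂ := by
    rw [Finset.sum_set_coe (f := fun z : Fin k → ZMod 2 => z)]
    have ht : ({a₁, a₂}ᶜ : Set (Fin k → ZMod 2)).toFinset = ({a₁, a₂} : Finset _)ᶜ := by
      simp [Set.toFinset_compl]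
    rw [ht]
    have h1 := Finset.sum_compl_add_sum ({a₁, a₂} : Finset (Fin k → ZMod 2)) (fun x => x)
    rw [Finset.sum_pair ha, hS] at h1
    linear_combination h1 - two_torsion (a₁ + a₂)
  have hSB : ∑ y : (({b₁, b₂}ᶜ : Set (Fin k → ZMod 2))), (y : Fin k → ZMod 2) = b₁ + b₂ := by
    rw [Finset.sum_set_coe (f := fun z : Fin k → ZMod 2 => z)]
    have ht : ({b₁, b₂}ᶜ : Set (Fin k → ZMod 2)).toFinset = ({b₁, b₂} : Finset _)ᶜ := by
      simp [Set.toFinset_compl]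
    rw [ht]
    have h1 := Finset.sum_compl_add_sum ({b₁, b₂} : Finset (Fin k → ZMod 2)) (fun x => x)
    rw [Finset.sum_pair hb, hS] at h1
    linear_combination h1 - two_torsion (b₁ + b₂)
  -- the total of the transversal values is 0
  have hval : ∑ x : (({a₁, a₂}ᶜ : Set (Fin k → ZMod 2))),
      ((x : Fin k → ZMod 2) + (φ x : Fin k → ZMod 2)) = 0 := by
    rw [Finset.sum_add_distrib, hSA,
      Equiv.sum_comp φ (fun y : (({b₁, b₂}ᶜ : Set (Fin k → ZMod 2))) => (y : Fin k → ZMod 2)),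
      hSB]
    linear_combination hsum
  -- the set of transversal values
  set T : Finset (Fin k → ZMod 2) :=
    Finset.image (fun x : (({a₁, a₂}ᶜ : Set (Fin k → ZMod 2))) =>
      (x : Fin k → ZMod 2) + (φ x : Fin k → ZMod 2)) Finset.univ with hT
  have hTsum : ∑ x ∈ T, x = 0 := by
    rw [hT, Finset.sum_image (fun x _ y _ h => hφ h)]
    exact hval
  have hcardG : Fintype.card (Fin k → ZMod 2) = 2 ^ k := by
    simp [ZMod.card]
  have h4 : 4 ≤ 2 ^ k := by
    calc (4 : ℕ) = 2 ^ 2 := rfl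
    _ ≤ 2 ^ k := Nat.pow_le_pow_right (by norm_num) hk
  have hcardA : Fintype.card (({a₁, a₂}ᶜ : Set (Fin k → ZMod 2))) = 2 ^ k - 2 := by
    rw [← Set.toFinset_card]
    have ht : ({a₁, a₂}ᶜ : Set (Fin k → ZMod 2)).toFinset = ({a₁, a₂} : Finset _)ᶜ := by
      simp [Set.toFinset_compl]
    rw [ht, Finset.card_compl, Finset.card_pair ha, hcardG]
  have hTcard : T.card = 2 ^ k - 2 := by
    rw [hT, Finset.card_image_of_injective _ hφ, Finset.card_univ, hcardA]
  have hTc : Tᶜ.card = 2 := by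
    rw [Finset.card_compl, hTcard, hcardG]
    omega
  obtain ⟨c, d, hcd, hTcc⟩ := Finset.card_eq_two.mp hTc
  have h1 := Finset.sum_compl_add_sum T (fun x => x)
  rw [hTcc, Finset.sum_pair hcd, hTsum, hS] at h1
  exact hcd (by linear_combination h1 - two_torsion d)
end

section
/- Let G be a finite group whose elements admit a harmonious ordering, i.e., an ordering a₁, a₂, …, a_n of all elements of G such that a₁a₂, a₂a₃, …, a_{n−1}a_n, a_na₁ is again an ordering of all elements of G. Then the product of all elements of G lies in the commutator subgroup G'. -/
/-- If a finite group `G` has a harmonious ordering — an enumeration `a : ℤ/n ≃ G` of its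
elements (cyclically indexed) such that the consecutive products `i ↦ a i * a (i+1)` again
enumerate all elements of `G` — then the product of all elements of `G` (in any fixed
order) lies in the commutator subgroup `G'`. -/
theorem prod_mem_commutator_of_harmonious
    (G : Type*) [Group G] [Fintype G]
    (a : ZMod (Fintype.card G) ≃ G)
    (hharm : Function.Bijective fun i : ZMod (Fintype.card G) => a i * a (i + 1))
    (l : List G) (hl : l.Nodup) (hl' : ∀ x : G, x ∈ l) :
    l.prod ∈ commutator G := by
  classical
  haveI : NeZero (Fintype.card G) := ⟨Fintype.card_ne_zero⟩
  set φ := Abelianization.of (G := G)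
  -- the product of all elements in the abelianization
  set P : Abelianization G := ∏ x : G, φ x with hP
  -- l.prod maps to P
  have hlP : φ l.prod = P := by
    have h1 : l.toFinset = Finset.univ := by
      ext x; simp [hl' x]
    calc φ l.prod = (l.map φ).prod := by rw [List.prod_hom]
      _ = l.toFinset.prod φ := (List.prod_toFinset φ hl).symm
      _ = P := by rw [h1, hP]
  -- reindexing: product over equiv a
  have ha : ∏ i : ZMod (Fintype.card G), φ (a i) = P := Equiv.prod_comp a φ
  have ha' : ∏ i : ZMod (Fintype.card G), φ (a (i + 1)) = P := by
    rw [← ha]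
    exact Equiv.prod_comp (Equiv.addRight (1 : ZMod (Fintype.card G))) (fun i => φ (a i))
  have hkey : P * P = P := by
    have := Function.Bijective.prod_comp hharm φ
    calc P * P = ∏ i : ZMod (Fintype.card G), (φ (a i) * φ (a (i + 1))) := by
          rw [Finset.prod_mul_distrib, ha, ha']
      _ = ∏ i : ZMod (Fintype.card G), φ (a i * a (i + 1)) := by
          simp [map_mul]
      _ = ∏ x : G, φ x := this
      _ = P := rfl
  have hP1 : P = 1 := by
    have := mul_right_cancel (b := P) (a := P) (c := 1) (by simpa using hkey)
    simpa using this
  have : φ l.prod = 1 := by rw [hlP, hP1]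
  exact (QuotientGroup.eq_one_iff _).mp this
end
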